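/- There exists C > 0 such that for all x with 0 < x ≤ 1, |x H_1^{(1)}(x)| ≤ C and |(d/dx)[x H_1^{(1)}(x)]| ≤ C; moreover |(d/dx)^2 [x H_1^{(1)}(x)]| ≤ C(1 + |log x|), and for every integer m > 2 there is C_m with |(d/dx)^m [x H_1^{(1)}(x)]| ≤ C_m x^{2-m}. -/

import Mathlib

/-!
Pulling `x^{1/2}` into Watson's integral gives `x H₁⁽¹⁾(x) = c e^{ix} W₀(x)`, where
`W_k(x) = ∫₀^∞ e^{-u} u^{1/2} (x + iu/2)^{1/2-k} du`, and differentiating under the integral sign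
gives `W_k' = (1/2 - k) W_{k+1}`. By Leibniz's rule the `m`-th derivative of `x H₁⁽¹⁾(x)` is a
fixed linear combination of `e^{ix} W_0(x), …, e^{ix} W_m(x)`, so it suffices to bound `W_j`.

With `z = x + iu/2` we have `|z| ≥ max(x, u/2)`, so the integrand of `W_{k+1}`, which has modulus
`e^{-u} (u/|z|)^{1/2} |z|^{-k}`, is at most `x^{-k}` for `u ≤ x` and at most `2^{k+1} e^{-u} u^{-k}`
for `u > x`. Splitting the integral at `u = x` gives `W_2 = O(1 + |log x|)` (from
`∫_x^1 du/u = -log x`) and `W_{k+3} = O(x^{-k-1})`, while `W_0` and `W_1` are bounded.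
-/

open MeasureTheory

/-- The Hankel function of the first kind of order `n`, for positive real
argument, via Watson's contour integral representation
`H_n^{(1)}(z) = (2/(πz))^{1/2} e^{i(z - nπ/2 - π/4)} / Γ(n-1/2)
  · ∫_0^∞ e^{-u} u^{n-1/2} (1 + iu/(2z))^{n-1/2} du`. -/
noncomputable def hankelH1 (n : ℕ) (z : ℝ) : ℂ :=
  ((2 : ℂ) / ((Real.pi : ℂ) * (z : ℂ))) ^ ((1:ℂ)/2) *
    Complex.exp (Complex.I * ((z : ℂ) - (n : ℂ) * (Real.pi : ℂ) / 2 - (Real.pi : ℂ) / 4)) /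
    Complex.Gamma ((n : ℂ) - 1/2) *
    ∫ u in Set.Ioi (0:ℝ),
      Complex.exp (-(u : ℂ)) * (u : ℂ) ^ ((n : ℂ) - 1/2) *
        (1 + Complex.I * (u : ℂ) / (2 * (z : ℂ))) ^ ((n : ℂ) - 1/2)

open Set Filter Topology

lemma ofReal_mul_cpow_of_pos {r : ℝ} (hr : 0 < r) (z w : ℂ) :
    ((r : ℂ) * z) ^ w = (r : ℂ) ^ w * z ^ w := by
  rcases eq_or_ne z 0 with rfl | hz
  · rcases eq_or_ne w 0 with rfl | hw <;> simp [*, Complex.zero_cpow]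
  have hr' : (r : ℂ) ≠ 0 := Complex.ofReal_ne_zero.2 hr.ne'
  rw [Complex.cpow_def_of_ne_zero (mul_ne_zero hr' hz), Complex.cpow_def_of_ne_zero hr',
    Complex.cpow_def_of_ne_zero hz, ← Complex.exp_add, Complex.log_ofReal_mul hr hz,
    Complex.ofReal_log hr.le, add_mul]

section DerivativeLadder

variable {𝕜 R E : Type*} [NontriviallyNormedField 𝕜] [CommSemiring R] [NormedAddCommGroup E]
  [NormedSpace 𝕜 E] [Module R E] [SMulCommClass 𝕜 R E] [ContinuousConstSMul R E]
  {U : Set 𝕜} {f : ℕ → 𝕜 → E} {c : ℕ → R}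

lemma iteratedDeriv_eq_prod_smul_of_hasDerivAt (hU : IsOpen U)
    (hf : ∀ k, ∀ x ∈ U, HasDerivAt (f k) (c k • f (k + 1) x) x) (n : ℕ) {x : 𝕜} (hx : x ∈ U) :
    iteratedDeriv n (f 0) x = (∏ l ∈ Finset.range n, c l) • f n x := by
  induction n generalizing x with
  | zero => simp
  | succ n ih =>
    have h : iteratedDeriv n (f 0) =ᶠ[𝓝 x] fun y ↦ (∏ l ∈ Finset.range n, c l) • f n y :=
      eventually_of_mem (hU.mem_nhds hx) fun y hy ↦ ih hy
    rw [iteratedDeriv_succ, h.deriv_eq, ((hf n x hx).fun_const_smul _).deriv, smul_smul,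
      Finset.prod_range_succ]

lemma contDiffOn_of_hasDerivAt_smul_succ (hU : IsOpen U)
    (hf : ∀ k, ∀ x ∈ U, HasDerivAt (f k) (c k • f (k + 1) x) x) (n : ℕ) (k : ℕ) :
    ContDiffOn 𝕜 n (f k) U := by
  induction n generalizing k with
  | zero => exact contDiffOn_zero.2 fun x hx ↦ (hf k x hx).continuousAt.continuousWithinAt
  | succ n ih =>
    rw [Nat.cast_succ, contDiffOn_succ_iff_deriv_of_isOpen hU]
    refine ⟨fun x hx ↦ (hf k x hx).differentiableAt.differentiableWithinAt, by simp, ?_⟩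
    exact ((ih (k + 1)).const_smul (c k)).congr fun x hx ↦ (hf k x hx).deriv

end DerivativeLadder

lemma integrableOn_exp_neg : IntegrableOn (fun u ↦ Real.exp (-u)) (Ioi 0) := by
  simpa using exp_neg_integrableOn_Ioi 0 one_pos

lemma integrableOn_exp_neg_mul_self : IntegrableOn (fun u ↦ Real.exp (-u) * u) (Ioi 0) := by
  simpa [show (2 : ℝ) - 1 = 1 by norm_num] using Real.GammaIntegral_convergent two_pos

lemma integrableOn_exp_neg_mul_add (c : ℝ) :
    IntegrableOn (fun u ↦ Real.exp (-u) * (c + u)) (Ioi 0) := by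
  simp_rw [mul_add]
  exact (integrableOn_exp_neg.mul_const c).add integrableOn_exp_neg_mul_self

lemma integral_exp_neg_mul_add (c : ℝ) :
    ∫ u in Ioi 0, Real.exp (-u) * (c + u) = c + 1 := by
  have hΓ : ∫ u in Ioi 0, Real.exp (-u) * u = 1 := by
    simpa [show (2 : ℝ) - 1 = 1 by norm_num] using (Real.Gamma_eq_integral two_pos).symm
  simp_rw [mul_add]
  rw [integral_add (integrableOn_exp_neg.mul_const c) integrableOn_exp_neg_mul_self,
    integral_mul_const, integral_exp_neg_Ioi_zero, hΓ, one_mul]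

lemma norm_setIntegral_Ioi_le_add {E : Type*} [NormedAddCommGroup E] [NormedSpace ℝ E]
    {f : ℝ → E} {g h : ℝ → ℝ} {a b : ℝ} (hab : a ≤ b) (hf : IntegrableOn f (Ioi a))
    (hg : IntegrableOn g (Ioc a b)) (hh : IntegrableOn h (Ioi b))
    (hfg : ∀ u ∈ Ioc a b, ‖f u‖ ≤ g u) (hfh : ∀ u ∈ Ioi b, ‖f u‖ ≤ h u) :
    ‖∫ u in Ioi a, f u‖ ≤ (∫ u in Ioc a b, g u) + ∫ u in Ioi b, h u := by
  rw [← Ioc_union_Ioi_eq_Ioi hab, setIntegral_union (Ioc_disjoint_Ioi le_rfl) measurableSet_Ioi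
    (hf.mono_set Ioc_subset_Ioi_self) (hf.mono_set (Ioi_subset_Ioi hab))]
  exact (norm_add_le _ _).trans <| add_le_add
    (norm_integral_le_of_norm_le hg (ae_restrict_of_forall_mem measurableSet_Ioc hfg))
    (norm_integral_le_of_norm_le hh (ae_restrict_of_forall_mem measurableSet_Ioi hfh))

section InversePowers

variable {x : ℝ}

lemma inv_pow_eqOn_rpow_neg (n : ℕ) :
    EqOn (fun u : ℝ ↦ (u ^ n)⁻¹) (fun u ↦ u ^ (-(n : ℝ))) (Ioi 0) := fun u (hu : 0 < u) ↦ by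
  simp [Real.rpow_neg hu.le]

lemma integrableOn_Ioi_inv_pow (hx : 0 < x) (n : ℕ) :
    IntegrableOn (fun u : ℝ ↦ (u ^ (n + 2))⁻¹) (Ioi x) := by
  refine (integrableOn_Ioi_rpow_of_lt (a := -((n + 2 : ℕ) : ℝ)) (by push_cast; linarith)
    hx).congr_fun ?_ measurableSet_Ioi
  exact ((inv_pow_eqOn_rpow_neg (n + 2)).mono (Ioi_subset_Ioi hx.le)).symm

lemma integral_Ioi_inv_pow (hx : 0 < x) (n : ℕ) :
    ∫ u in Ioi x, (u ^ (n + 2))⁻¹ = (x ^ (n + 1))⁻¹ / (n + 1) := by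
  rw [setIntegral_congr_fun measurableSet_Ioi
      ((inv_pow_eqOn_rpow_neg (n + 2)).mono (Ioi_subset_Ioi hx.le)),
    integral_Ioi_rpow_of_lt (by push_cast; linarith) hx,
    show -((n + 2 : ℕ) : ℝ) + 1 = -((n + 1 : ℕ) : ℝ) by push_cast; ring,
    Real.rpow_neg hx.le, Real.rpow_natCast, neg_div_neg_eq]
  push_cast
  ring

lemma rpow_two_sub_add_three (hx : 0 < x) (k : ℕ) :
    x ^ ((2 : ℝ) - (k + 3 : ℕ)) = 1 / x ^ (k + 1) := by
  rw [show (2 : ℝ) - (k + 3 : ℕ) = -((k + 1 : ℕ) : ℝ) by push_cast; ring, Real.rpow_neg hx.le,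
    Real.rpow_natCast, one_div]

end InversePowers

lemma integrableOn_Ioi_exp_neg_div {x : ℝ} (hx : 0 < x) :
    IntegrableOn (fun u ↦ Real.exp (-u) / u) (Ioi x) := by
  refine ((exp_neg_integrableOn_Ioi x one_pos).div_const x).mono' ?_ ?_
  · exact (by fun_prop : Measurable fun u : ℝ ↦ Real.exp (-u) / u).aestronglyMeasurable
  · refine ae_restrict_of_forall_mem measurableSet_Ioi fun u (hu : x < u) ↦ ?_
    rw [Real.norm_of_nonneg (div_pos (Real.exp_pos _) (hx.trans hu)).le]
    simp only [neg_mul, one_mul]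
    gcongr

lemma integral_Ioi_exp_neg_div_le {x : ℝ} (hx : 0 < x) (hx₁ : x ≤ 1) :
    ∫ u in Ioi x, Real.exp (-u) / u ≤ 1 - Real.log x := by
  have hinv : IntegrableOn (fun u : ℝ ↦ u⁻¹) (Ioc x 1) :=
    (continuousOn_inv₀.mono fun u hu ↦ (hx.trans_le hu.1).ne').integrableOn_Icc.mono_set
      Ioc_subset_Icc_self
  have hnorm : ∀ u, x < u → ‖Real.exp (-u) / u‖ = Real.exp (-u) / u := fun u hu ↦
    Real.norm_of_nonneg (div_pos (Real.exp_pos _) (hx.trans hu)).le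
  have h := norm_setIntegral_Ioi_le_add hx₁ (integrableOn_Ioi_exp_neg_div hx) hinv
    (by simpa using exp_neg_integrableOn_Ioi 1 one_pos)
    (fun u hu ↦ (hnorm u hu.1).trans_le <| by
      rw [div_eq_mul_inv]
      exact mul_le_of_le_one_left (inv_nonneg.2 (hx.trans hu.1).le)
        (Real.exp_le_one_iff.2 (by linarith [hx.trans hu.1])))
    (fun u (hu : 1 < u) ↦ (hnorm u (hx₁.trans_lt hu)).trans_le <|
      div_le_self (Real.exp_nonneg _) hu.le)
  rw [← intervalIntegral.integral_of_le hx₁, integral_inv_of_pos hx one_pos, one_div,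
    Real.log_inv, integral_exp_neg_Ioi] at h
  have he : Real.exp (-1) ≤ 1 := Real.exp_le_one_iff.2 (by norm_num)
  linarith [(Real.le_norm_self _).trans h]

lemma integral_Ioc_zero_const_div_pow {x : ℝ} (hx : 0 < x) (k : ℕ) :
    ∫ _ in Ioc 0 x, 1 / x ^ (k + 1) = 1 / x ^ k := by
  rw [setIntegral_const, Real.volume_real_Ioc_of_le hx.le, smul_eq_mul, pow_succ]
  field_simp
  ring

noncomputable def watsonPoint (x u : ℝ) : ℂ := x + Complex.I * u / 2

noncomputable def watsonIntegrand (k : ℕ) (x u : ℝ) : ℂ :=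
  Complex.exp (-(u : ℂ)) * (u : ℂ) ^ (1 / 2 : ℂ) * watsonPoint x u ^ ((1 / 2 - k : ℝ) : ℂ)

noncomputable def watsonIntegral (k : ℕ) (x : ℝ) : ℂ :=
  ∫ u in Ioi 0, watsonIntegrand k x u

section WatsonPoint

variable {x u : ℝ}

@[simp] lemma watsonPoint_re : (watsonPoint x u).re = x := by simp [watsonPoint]

@[simp] lemma watsonPoint_im : (watsonPoint x u).im = u / 2 := by simp [watsonPoint]

lemma le_norm_watsonPoint : x ≤ ‖watsonPoint x u‖ := by
  simpa using (le_abs_self _).trans (Complex.abs_re_le_norm (watsonPoint x u))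

lemma half_le_norm_watsonPoint : u / 2 ≤ ‖watsonPoint x u‖ := by
  simpa using (le_abs_self _).trans (Complex.abs_im_le_norm (watsonPoint x u))

lemma norm_watsonPoint_le (hx : 0 ≤ x) (hu : 0 ≤ u) : ‖watsonPoint x u‖ ≤ x + u := by
  have h := Complex.norm_le_abs_re_add_abs_im (watsonPoint x u)
  rw [watsonPoint_re, watsonPoint_im, abs_of_nonneg hx, abs_of_nonneg (by positivity)] at h
  linarith

lemma watsonPoint_mem_slitPlane (hx : 0 < x) : watsonPoint x u ∈ Complex.slitPlane :=
  Complex.mem_slitPlane_iff.2 (Or.inl (by simpa using hx))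

end WatsonPoint

section PointwiseBounds

variable {x u : ℝ}

lemma norm_watsonIntegrand (k : ℕ) (hu : 0 ≤ u) :
    ‖watsonIntegrand k x u‖ =
      Real.exp (-u) * u ^ (1 / 2 : ℝ) * ‖watsonPoint x u‖ ^ (1 / 2 - k : ℝ) := by
  rw [watsonIntegrand, norm_mul, norm_mul, Complex.norm_exp, Complex.norm_cpow_real,
    show (1 / 2 : ℂ) = ((1 / 2 : ℝ) : ℂ) by push_cast; ring, Complex.norm_cpow_real]
  simp [abs_of_nonneg hu]

lemma norm_watsonIntegrand_zero (hu : 0 ≤ u) :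
    ‖watsonIntegrand 0 x u‖ = Real.exp (-u) * √(u * ‖watsonPoint x u‖) := by
  rw [norm_watsonIntegrand 0 hu, Nat.cast_zero, sub_zero, mul_assoc,
    ← Real.mul_rpow hu (norm_nonneg _), Real.sqrt_eq_rpow]

lemma norm_watsonIntegrand_succ (k : ℕ) (hx : 0 < x) (hu : 0 ≤ u) :
    ‖watsonIntegrand (k + 1) x u‖ =
      Real.exp (-u) * √(u / ‖watsonPoint x u‖) / ‖watsonPoint x u‖ ^ k := by
  have hz : 0 < ‖watsonPoint x u‖ := hx.trans_le le_norm_watsonPoint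
  rw [norm_watsonIntegrand _ hu, Real.sqrt_eq_rpow, Real.div_rpow hu hz.le,
    show (1 / 2 - (k + 1 : ℕ) : ℝ) = -(1 / 2) - k by push_cast; ring,
    Real.rpow_sub hz, Real.rpow_neg hz.le, Real.rpow_natCast]
  ring

lemma norm_watsonIntegrand_zero_le (hx : 0 ≤ x) (hu : 0 ≤ u) :
    ‖watsonIntegrand 0 x u‖ ≤ Real.exp (-u) * (x + u) := by
  rw [norm_watsonIntegrand_zero hu]
  gcongr
  have := norm_watsonPoint_le hx hu
  rw [Real.sqrt_le_iff]
  constructor <;> nlinarith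

lemma sqrt_div_norm_watsonPoint_le (hx : 0 < x) : √(u / ‖watsonPoint x u‖) ≤ 2 := by
  have hz : 0 < ‖watsonPoint x u‖ := hx.trans_le le_norm_watsonPoint
  have := half_le_norm_watsonPoint (x := x) (u := u)
  rw [Real.sqrt_le_iff, div_le_iff₀ hz]
  constructor <;> linarith

lemma norm_watsonIntegrand_succ_le (k : ℕ) (hx : 0 < x) (hu : 0 ≤ u) :
    ‖watsonIntegrand (k + 1) x u‖ ≤ 2 * Real.exp (-u) / x ^ k := by
  rw [norm_watsonIntegrand_succ k hx hu, mul_comm 2]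
  gcongr
  · exact sqrt_div_norm_watsonPoint_le hx
  · exact le_norm_watsonPoint

lemma norm_watsonIntegrand_succ_le_of_le (k : ℕ) (hx : 0 < x) (hu : 0 ≤ u) (hux : u ≤ x) :
    ‖watsonIntegrand (k + 1) x u‖ ≤ 1 / x ^ k := by
  have hz : x ≤ ‖watsonPoint x u‖ := le_norm_watsonPoint
  rw [norm_watsonIntegrand_succ k hx hu]
  gcongr
  refine mul_le_one₀ (Real.exp_le_one_iff.2 (neg_nonpos.2 hu)) (Real.sqrt_nonneg _) ?_
  rw [Real.sqrt_le_one, div_le_one (hx.trans_le hz)]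
  exact hux.trans hz

lemma norm_watsonIntegrand_succ_le_of_pos (k : ℕ) (hx : 0 < x) (hu : 0 < u) :
    ‖watsonIntegrand (k + 1) x u‖ ≤ 2 ^ (k + 1) * Real.exp (-u) / u ^ k := by
  calc ‖watsonIntegrand (k + 1) x u‖
      ≤ Real.exp (-u) * 2 / (u / 2) ^ k := by
        rw [norm_watsonIntegrand_succ k hx hu.le]
        gcongr
        · exact sqrt_div_norm_watsonPoint_le hx
        · exact half_le_norm_watsonPoint
    _ = 2 ^ (k + 1) * Real.exp (-u) / u ^ k := by
        rw [div_pow, div_div_eq_mul_div, pow_succ]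
        ring

end PointwiseBounds

lemma measurable_watsonIntegrand (k : ℕ) (x : ℝ) : Measurable (watsonIntegrand k x) := by
  unfold watsonIntegrand watsonPoint
  fun_prop

lemma integrableOn_watsonIntegrand (k : ℕ) {x : ℝ} (hx : 0 < x) :
    IntegrableOn (watsonIntegrand k x) (Ioi 0) := by
  cases k with
  | zero =>
    exact (integrableOn_exp_neg_mul_add x).mono'
      (measurable_watsonIntegrand 0 x).aestronglyMeasurable
      (ae_restrict_of_forall_mem measurableSet_Ioi fun u (hu : 0 < u) ↦
        norm_watsonIntegrand_zero_le hx.le hu.le)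
  | succ k =>
    exact (integrableOn_exp_neg.const_mul (2 / x ^ k)).mono'
      (measurable_watsonIntegrand _ x).aestronglyMeasurable
      (ae_restrict_of_forall_mem measurableSet_Ioi fun u (hu : 0 < u) ↦
        (norm_watsonIntegrand_succ_le k hx hu.le).trans_eq (by ring))

lemma norm_watsonIntegral_zero_le {x : ℝ} (hx : 0 < x) : ‖watsonIntegral 0 x‖ ≤ x + 1 := by
  rw [← integral_exp_neg_mul_add x]
  exact norm_integral_le_of_norm_le (integrableOn_exp_neg_mul_add x)
    (ae_restrict_of_forall_mem measurableSet_Ioi fun u (hu : 0 < u) ↦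
      norm_watsonIntegrand_zero_le hx.le hu.le)

lemma norm_watsonIntegral_succ_le (k : ℕ) {x : ℝ} (hx : 0 < x) :
    ‖watsonIntegral (k + 1) x‖ ≤ 2 / x ^ k := by
  have h := norm_integral_le_of_norm_le (integrableOn_exp_neg.const_mul (2 / x ^ k))
    (ae_restrict_of_forall_mem measurableSet_Ioi fun u (hu : 0 < u) ↦
      (norm_watsonIntegrand_succ_le k hx hu.le).trans_eq (by ring))
  rwa [integral_const_mul, integral_exp_neg_Ioi_zero, mul_one] at h

lemma norm_watsonIntegral_two_le {x : ℝ} (hx : 0 < x) (hx₁ : x ≤ 1) :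
    ‖watsonIntegral 2 x‖ ≤ 5 - 4 * Real.log x := by
  have h := norm_setIntegral_Ioi_le_add hx.le (integrableOn_watsonIntegrand 2 hx)
    (integrableOn_const (C := 1 / x ^ 1) measure_Ioc_lt_top.ne)
    ((integrableOn_Ioi_exp_neg_div hx).const_mul 4)
    (fun u hu ↦ norm_watsonIntegrand_succ_le_of_le 1 hx hu.1.le hu.2)
    (fun u (hu : x < u) ↦ (norm_watsonIntegrand_succ_le_of_pos 1 hx (hx.trans hu)).trans_eq
      (by ring))
  rw [integral_Ioc_zero_const_div_pow hx 0, integral_const_mul] at h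
  have := integral_Ioi_exp_neg_div_le hx hx₁
  simp only [pow_zero, div_one] at h
  exact h.trans (by linarith)

lemma norm_watsonIntegral_add_three_le (k : ℕ) {x : ℝ} (hx : 0 < x) :
    ‖watsonIntegral (k + 3) x‖ ≤ (1 + 2 ^ (k + 3)) / x ^ (k + 1) := by
  have h := norm_setIntegral_Ioi_le_add hx.le (integrableOn_watsonIntegrand (k + 3) hx)
    (integrableOn_const (C := 1 / x ^ (k + 2)) measure_Ioc_lt_top.ne)
    ((integrableOn_Ioi_inv_pow hx k).const_mul (2 ^ (k + 3)))
    (fun u hu ↦ norm_watsonIntegrand_succ_le_of_le (k + 2) hx hu.1.le hu.2)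
    (fun u (hu : x < u) ↦ (norm_watsonIntegrand_succ_le_of_pos (k + 2) hx (hx.trans hu)).trans <| by
      have hu₀ : 0 < u := hx.trans hu
      rw [div_eq_mul_inv]
      refine mul_le_mul_of_nonneg_right (mul_le_of_le_one_right (by positivity) ?_) (by positivity)
      exact Real.exp_le_one_iff.2 (neg_nonpos.2 hu₀.le))
  rw [integral_Ioc_zero_const_div_pow hx (k + 1), integral_const_mul,
    integral_Ioi_inv_pow hx k] at h
  calc _ ≤ _ := h
    _ ≤ 1 / x ^ (k + 1) + 2 ^ (k + 3) * (1 / x ^ (k + 1)) := by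
      rw [one_div]
      gcongr
      exact div_le_self (by positivity) (by linarith)
    _ = (1 + 2 ^ (k + 3)) / x ^ (k + 1) := by ring

lemma hasDerivAt_watsonIntegrand (k : ℕ) (u : ℝ) {x : ℝ} (hx : 0 < x) :
    HasDerivAt (fun t ↦ watsonIntegrand k t u)
      (((1 / 2 - k : ℝ) : ℂ) * watsonIntegrand (k + 1) x u) x := by
  have hz : HasDerivAt (fun z : ℂ ↦ (z + Complex.I * u / 2) ^ ((1 / 2 - k : ℝ) : ℂ))
      (((1 / 2 - k : ℝ) : ℂ) * watsonPoint x u ^ (((1 / 2 - k : ℝ) : ℂ) - 1) * 1) x :=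
    ((hasDerivAt_id _).add_const _).cpow_const (watsonPoint_mem_slitPlane hx)
  refine (hz.comp_ofReal.const_mul (Complex.exp (-(u : ℂ)) * (u : ℂ) ^ (1 / 2 : ℂ))).congr_deriv ?_
  rw [watsonIntegrand, show ((1 / 2 - k : ℝ) : ℂ) - 1 = ((1 / 2 - (k + 1 : ℕ) : ℝ) : ℂ) by
    push_cast; ring]
  ring

lemma hasDerivAt_watsonIntegral (k : ℕ) {x : ℝ} (hx : 0 < x) :
    HasDerivAt (watsonIntegral k) (((1 / 2 - k : ℝ) : ℂ) * watsonIntegral (k + 1) x) x := by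
  set c : ℂ := ((1 / 2 - k : ℝ) : ℂ)
  have key := hasDerivAt_integral_of_dominated_loc_of_deriv_le (μ := volume.restrict (Ioi 0))
    (F := fun t u ↦ watsonIntegrand k t u) (F' := fun t u ↦ c * watsonIntegrand (k + 1) t u)
    (bound := fun u ↦ ‖c‖ * (2 / (x / 2) ^ k) * Real.exp (-u)) (Ioi_mem_nhds (half_lt_self hx))
    (Eventually.of_forall fun t ↦ (measurable_watsonIntegrand k t).aestronglyMeasurable)
    (integrableOn_watsonIntegrand k hx)
    ((measurable_watsonIntegrand (k + 1) x).aestronglyMeasurable.const_mul c)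
    (ae_restrict_of_forall_mem measurableSet_Ioi fun u (hu : 0 < u) t (ht : x / 2 < t) ↦ by
      have ht₀ : 0 < t := (half_pos hx).trans ht
      rw [norm_mul, mul_assoc]
      gcongr
      calc ‖watsonIntegrand (k + 1) t u‖ ≤ 2 * Real.exp (-u) / t ^ k :=
            norm_watsonIntegrand_succ_le k ht₀ hu.le
        _ ≤ 2 * Real.exp (-u) / (x / 2) ^ k := by gcongr
        _ = 2 / (x / 2) ^ k * Real.exp (-u) := by ring)
    (integrableOn_exp_neg.const_mul _)
    (ae_restrict_of_forall_mem measurableSet_Ioi fun u _ t (ht : x / 2 < t) ↦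
      hasDerivAt_watsonIntegrand k u ((half_pos hx).trans ht))
  rw [integral_const_mul] at key
  exact key.2

lemma iteratedDeriv_watsonIntegral_zero (n : ℕ) {x : ℝ} (hx : 0 < x) :
    iteratedDeriv n (watsonIntegral 0) x =
      (∏ l ∈ Finset.range n, ((1 / 2 - l : ℝ) : ℂ)) * watsonIntegral n x :=
  iteratedDeriv_eq_prod_smul_of_hasDerivAt (f := watsonIntegral)
    (c := fun l ↦ ((1 / 2 - l : ℝ) : ℂ)) isOpen_Ioi
    (fun k _ hy ↦ hasDerivAt_watsonIntegral k hy) n hx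

lemma contDiffAt_watsonIntegral (n k : ℕ) {x : ℝ} (hx : 0 < x) :
    ContDiffAt ℝ n (watsonIntegral k) x :=
  (contDiffOn_of_hasDerivAt_smul_succ (f := watsonIntegral)
    (c := fun l ↦ ((1 / 2 - l : ℝ) : ℂ)) isOpen_Ioi
    (fun k _ hy ↦ hasDerivAt_watsonIntegral k hy) n k).contDiffAt (Ioi_mem_nhds hx)

noncomputable def hankelOneConst : ℂ :=
  (2 / Real.pi : ℂ) ^ (1 / 2 : ℂ) * Complex.exp (-(3 * Real.pi / 4) * Complex.I) /
    Complex.Gamma (1 / 2)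

lemma ofReal_mul_hankelH1_one {x : ℝ} (hx : 0 < x) :
    (x : ℂ) * hankelH1 1 x =
      hankelOneConst * (Complex.exp (Complex.I * x) * watsonIntegral 0 x) := by
  have hx' : (x : ℂ) ≠ 0 := Complex.ofReal_ne_zero.2 hx.ne'
  have hsqrt : ((x : ℂ) ^ (1 / 2 : ℂ)) ^ 2 = x := by
    rw [one_div]; exact Complex.cpow_ofNat_inv_pow _ 2
  have hprefactor : (x : ℂ) * (2 / (Real.pi * x) : ℂ) ^ (1 / 2 : ℂ) =
      (2 / Real.pi : ℂ) ^ (1 / 2 : ℂ) * (x : ℂ) ^ (1 / 2 : ℂ) := by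
    have h := Complex.div_cpow_ofReal_nonneg (a := 2 / Real.pi) (by positivity) hx.le (1 / 2 : ℂ)
    push_cast at h
    have hne : (x : ℂ) ^ (1 / 2 : ℂ) ≠ 0 :=
      (Complex.cpow_ne_zero_iff_of_exponent_ne_zero (by norm_num)).2 hx'
    rw [div_div] at h
    rw [h]
    nth_rewrite 1 [← hsqrt]
    field_simp
  have hphase : Complex.exp (Complex.I * (x - (1 : ℕ) * Real.pi / 2 - Real.pi / 4)) =
      Complex.exp (Complex.I * x) * Complex.exp (-(3 * Real.pi / 4) * Complex.I) := by
    rw [← Complex.exp_add]; congr 1; push_cast; ring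
  rw [hankelH1, hphase, show ((1 : ℕ) : ℂ) - 1 / 2 = 1 / 2 by norm_num, hankelOneConst]
  set G : ℂ := ∫ u in Ioi (0 : ℝ), Complex.exp (-(u : ℂ)) * (u : ℂ) ^ (1 / 2 : ℂ) *
    (1 + Complex.I * u / (2 * x)) ^ (1 / 2 : ℂ)
  have hintegral : (x : ℂ) ^ (1 / 2 : ℂ) * G = watsonIntegral 0 x := by
    rw [← integral_const_mul]
    refine integral_congr_ae (ae_of_all _ fun u ↦ ?_)
    have hz : watsonPoint x u = x * (1 + Complex.I * u / (2 * x)) := by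
      rw [watsonPoint]; field_simp
    rw [watsonIntegrand, hz, ofReal_mul_cpow_of_pos hx]
    push_cast [sub_zero]
    ring
  rw [← hintegral]
  linear_combination (Complex.exp (Complex.I * x) * Complex.exp (-(3 * Real.pi / 4) * Complex.I) /
    Complex.Gamma (1 / 2) * G) * hprefactor

lemma iteratedDeriv_exp_I_mul (n : ℕ) (x : ℝ) :
    iteratedDeriv n (fun y : ℝ ↦ Complex.exp (Complex.I * y)) x =
      Complex.I ^ n * Complex.exp (Complex.I * x) := by
  have h := iteratedDeriv_eq_prod_smul_of_hasDerivAt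
    (f := fun (_ : ℕ) (y : ℝ) ↦ Complex.exp (Complex.I * y)) (c := fun _ ↦ Complex.I)
    isOpen_univ (fun _ y _ ↦ ?_) n (mem_univ x)
  · simpa using h
  · simpa [mul_comm] using ((hasDerivAt_id (y : ℂ)).const_mul Complex.I).cexp.comp_ofReal

lemma exists_norm_iteratedDeriv_le (m : ℕ) : ∃ A : ℝ, ∀ x : ℝ, 0 < x → ∀ M : ℝ,
    (∀ j ≤ m, ‖watsonIntegral j x‖ ≤ M) →
      ‖iteratedDeriv m (fun y : ℝ ↦ (y : ℂ) * hankelH1 1 y) x‖ ≤ A * M := by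
  set P : ℕ → ℂ := fun j ↦ ∏ l ∈ Finset.range j, ((1 / 2 - l : ℝ) : ℂ)
  refine ⟨‖hankelOneConst‖ * ∑ i ∈ Finset.range (m + 1), m.choose i * ‖P (m - i)‖,
    fun x hx M hM ↦ ?_⟩
  have hev : (fun y : ℝ ↦ (y : ℂ) * hankelH1 1 y) =ᶠ[𝓝 x]
      fun y ↦ hankelOneConst * (Complex.exp (Complex.I * y) * watsonIntegral 0 y) :=
    eventually_of_mem (Ioi_mem_nhds hx) fun y hy ↦ ofReal_mul_hankelH1_one hy
  have hexp : ContDiffAt ℝ m (fun y : ℝ ↦ Complex.exp (Complex.I * y)) x :=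
    (contDiff_const.mul Complex.ofRealCLM.contDiff).cexp.contDiffAt
  rw [hev.iteratedDeriv_eq, iteratedDeriv_const_mul_field,
    iteratedDeriv_fun_mul hexp (contDiffAt_watsonIntegral m 0 hx), norm_mul, mul_assoc,
    Finset.sum_mul]
  refine mul_le_mul_of_nonneg_left ((norm_sum_le _ _).trans (Finset.sum_le_sum fun i hi ↦ ?_))
    (norm_nonneg _)
  rw [iteratedDeriv_exp_I_mul, iteratedDeriv_watsonIntegral_zero _ hx]
  simp only [norm_mul, norm_pow, Complex.norm_I, one_pow, Complex.norm_natCast,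
    Complex.norm_exp_I_mul_ofReal, mul_one, ← mul_assoc]
  exact mul_le_mul_of_nonneg_left (hM _ (Nat.sub_le m i)) (by positivity)

lemma exists_pos_norm_iteratedDeriv_le {m : ℕ} {g : ℝ → ℝ} {C : ℝ}
    (hg : ∀ x : ℝ, 0 < x → x ≤ 1 → 0 ≤ g x)
    (hW : ∀ x : ℝ, 0 < x → x ≤ 1 → ∀ j ≤ m, ‖watsonIntegral j x‖ ≤ C * g x) :
    ∃ C > 0, ∀ x : ℝ, 0 < x → x ≤ 1 →
      ‖iteratedDeriv m (fun y : ℝ ↦ (y : ℂ) * hankelH1 1 y) x‖ ≤ C * g x := by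
  obtain ⟨A, hA⟩ := exists_norm_iteratedDeriv_le m
  refine ⟨max (A * C) 1, by positivity, fun x hx hx₁ ↦ ?_⟩
  calc _ ≤ A * (C * g x) := hA x hx _ (hW x hx hx₁)
    _ ≤ max (A * C) 1 * g x := by
      rw [← mul_assoc]
      exact mul_le_mul_of_nonneg_right (le_max_left _ _) (hg x hx hx₁)

section SmallArgument

variable {x : ℝ} {j : ℕ}

lemma norm_watsonIntegral_le_two (hx : 0 < x) (hx₁ : x ≤ 1) (hj : j ≤ 1) :
    ‖watsonIntegral j x‖ ≤ 2 := by
  interval_cases j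
  · linarith [norm_watsonIntegral_zero_le hx]
  · simpa using norm_watsonIntegral_succ_le 0 hx

lemma norm_watsonIntegral_le_log (hx : 0 < x) (hx₁ : x ≤ 1) (hj : j ≤ 2) :
    ‖watsonIntegral j x‖ ≤ 5 * (1 + |Real.log x|) := by
  have hlog := neg_le_abs (Real.log x)
  rcases (show j ≤ 1 ∨ j = 2 by omega) with hj | rfl
  · linarith [norm_watsonIntegral_le_two hx hx₁ hj, abs_nonneg (Real.log x)]
  · linarith [norm_watsonIntegral_two_le hx hx₁, abs_nonneg (Real.log x)]

lemma norm_watsonIntegral_le_inv_pow (k : ℕ) (hx : 0 < x) (hx₁ : x ≤ 1) (hj : j ≤ k + 3) :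
    ‖watsonIntegral j x‖ ≤ (1 + 2 ^ (k + 3)) / x ^ (k + 1) := by
  have hpow : ∀ i ≤ k + 1, 1 / x ^ i ≤ 1 / x ^ (k + 1) := fun i hi ↦
    one_div_le_one_div_of_le (by positivity) (pow_le_pow_of_le_one hx.le hx₁ hi)
  have hone : 1 ≤ 1 / x ^ (k + 1) := by simpa using hpow 0 (Nat.zero_le _)
  rcases Nat.lt_or_ge j 2 with hj₂ | hj₂
  · calc ‖watsonIntegral j x‖ ≤ 2 := norm_watsonIntegral_le_two hx hx₁ (by omega)
      _ ≤ (1 + 2 ^ (k + 3)) * 1 := by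
        have : (2 : ℝ) ≤ 2 ^ (k + 3) := le_self_pow₀ one_le_two (by omega)
        linarith
      _ ≤ (1 + 2 ^ (k + 3)) / x ^ (k + 1) := by
        rw [← mul_one_div]; gcongr
  obtain ⟨i, rfl⟩ := Nat.exists_eq_add_of_le' hj₂
  rcases (show i ≤ k ∨ i = k + 1 by omega) with hi | rfl
  · calc ‖watsonIntegral (i + 1 + 1) x‖ ≤ 2 * (1 / x ^ (i + 1)) :=
        (norm_watsonIntegral_succ_le (i + 1) hx).trans_eq (by ring)
      _ ≤ (1 + 2 ^ (k + 3)) * (1 / x ^ (k + 1)) := by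
        have : (2 : ℝ) ≤ 2 ^ (k + 3) := le_self_pow₀ one_le_two (by omega)
        exact mul_le_mul (by linarith) (hpow _ (by omega)) (by positivity) (by positivity)
      _ = (1 + 2 ^ (k + 3)) / x ^ (k + 1) := mul_one_div _ _
  · exact norm_watsonIntegral_add_three_le k hx

end SmallArgument

/-- Smoothness of `x ↦ x H_1^{(1)}(x)` near the origin: the function and its
first derivative are bounded on `(0,1]`, the second derivative is bounded by a
logarithm, and the `m`-th derivative for `m > 2` is bounded by `x^{2-m}`. -/
theorem stmt7 :
    (∃ C > 0, ∀ x : ℝ, 0 < x → x ≤ 1 →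
      ‖(x : ℂ) * hankelH1 1 x‖ ≤ C ∧
      ‖deriv (fun y : ℝ => (y : ℂ) * hankelH1 1 y) x‖ ≤ C) ∧
    (∃ C > 0, ∀ x : ℝ, 0 < x → x ≤ 1 →
      ‖iteratedDeriv 2 (fun y : ℝ => (y : ℂ) * hankelH1 1 y) x‖ ≤
        C * (1 + |Real.log x|)) ∧
    (∀ m : ℕ, 2 < m → ∃ C > 0, ∀ x : ℝ, 0 < x → x ≤ 1 →
      ‖iteratedDeriv m (fun y : ℝ => (y : ℂ) * hankelH1 1 y) x‖ ≤
        C * x ^ ((2:ℝ) - m)) := by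
  have bounded (m : ℕ) (hm : m ≤ 1) := exists_pos_norm_iteratedDeriv_le (m := m) (C := 2)
    (g := fun _ ↦ 1) (fun _ _ _ ↦ zero_le_one) fun x hx hx₁ j hj ↦
      (norm_watsonIntegral_le_two hx hx₁ (hj.trans hm)).trans_eq (mul_one 2).symm
  refine ⟨?_, exists_pos_norm_iteratedDeriv_le (fun x _ _ ↦ by positivity)
    fun x hx hx₁ j hj ↦ norm_watsonIntegral_le_log hx hx₁ hj, fun m hm ↦ ?_⟩
  · obtain ⟨C₀, hC₀, h₀⟩ := bounded 0 zero_le_one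
    obtain ⟨C₁, hC₁, h₁⟩ := bounded 1 le_rfl
    refine ⟨max C₀ C₁, by positivity, fun x hx hx₁ ↦ ⟨?_, ?_⟩⟩
    · have h := h₀ x hx hx₁
      rw [iteratedDeriv_zero, mul_one] at h
      exact h.trans (le_max_left _ _)
    · have h := h₁ x hx hx₁
      rw [iteratedDeriv_one, mul_one] at h
      exact h.trans (le_max_right _ _)
  · obtain ⟨k, rfl⟩ : ∃ k, m = k + 3 := ⟨m - 3, by omega⟩
    exact exists_pos_norm_iteratedDeriv_le (fun x hx _ ↦ by positivity) fun x hx hx₁ j hj ↦ by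
      rw [rpow_two_sub_add_three hx, mul_one_div]
      exact norm_watsonIntegral_le_inv_pow k hx hx₁ hj
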